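/- Let n, m ≥ 1 and let u be a measurable function on ℝ^n × ℝ^m. Then for every R > 0: ‖⟨x⟩_R^{-1}·u‖_{L²(ℝ^{n+m})} ≤ 4·‖u‖_X and ‖⟨x⟩_R^{-3}·u‖_{L²(ℝ^{n+m})} ≤ 10·‖u‖_{X₁}. -/

import Mathlib

open MeasureTheory ENNReal Real

noncomputable section

/-- Points of the waveguide ambient space `ℝ^n × ℝ^m`. -/
abbrev Pt (n m : ℕ) := EuclideanSpace ℝ (Fin n) × EuclideanSpace ℝ (Fin m)

variable {n m : ℕ}

/-- `L²` norm over a subset of `ℝ^{n+m}`. -/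
def L2 {F : Type*} [NormedAddCommGroup F] (f : Pt n m → F) (S : Set (Pt n m)) : ℝ≥0∞ :=
  eLpNorm f 2 (volume.restrict S)

/-- Morrey–Campanato norm `‖f‖_X = sup_{R>0} R^{-1/2} ‖f‖_{L²(|x|≤R)}`. -/
def normX {F : Type*} [NormedAddCommGroup F] (f : Pt n m → F) : ℝ≥0∞ :=
  ⨆ (R : ℝ) (_ : 0 < R), ENNReal.ofReal (R ^ (-(1:ℝ)/2)) * L2 f {p : Pt n m | ‖p.1‖ ≤ R}

/-- Morrey–Campanato norm `‖f‖_{X₁} = sup_{R>0} R^{-3/2} ‖f‖_{L²(|x|≤R)}`. -/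
def normX1 {F : Type*} [NormedAddCommGroup F] (f : Pt n m → F) : ℝ≥0∞ :=
  ⨆ (R : ℝ) (_ : 0 < R), ENNReal.ofReal (R ^ (-(3:ℝ)/2)) * L2 f {p : Pt n m | ‖p.1‖ ≤ R}

/-- Dual Morrey–Campanato norm
`‖f‖_{X*} = Σ_{j∈ℤ} 2^{j/2} ‖f‖_{L²(2^{j-1}≤|x|≤2^j)}`. -/
def normXstar {F : Type*} [NormedAddCommGroup F] (f : Pt n m → F) : ℝ≥0∞ :=
  ∑' j : ℤ, ENNReal.ofReal ((2:ℝ) ^ ((j:ℝ)/2)) *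
    L2 f {p : Pt n m | (2:ℝ)^(j-1) ≤ ‖p.1‖ ∧ ‖p.1‖ ≤ (2:ℝ)^j}

/-- Standard basis vector in the `x` variables. -/
def ex (n m : ℕ) (i : Fin n) : Pt n m := (EuclideanSpace.single i 1, 0)

/-- Standard basis vector in the `y` variables. -/
def ey (n m : ℕ) (i : Fin m) : Pt n m := (0, EuclideanSpace.single i 1)

/-- Laplacian in all `n+m` variables. -/
def lap (u : Pt n m → ℂ) (p : Pt n m) : ℂ :=
  (∑ i : Fin n, fderiv ℝ (fun q => fderiv ℝ u q (ex n m i)) p (ex n m i)) +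
  ∑ i : Fin m, fderiv ℝ (fun q => fderiv ℝ u q (ey n m i)) p (ey n m i)

/-- Pointwise euclidean norm of the gradient in the `x` variables only. -/
def gradXnorm (u : Pt n m → ℂ) (p : Pt n m) : ℝ :=
  Real.sqrt (∑ i : Fin n, ‖fderiv ℝ u p (ex n m i)‖^2)

/-- Pointwise squared euclidean norm of the full gradient. -/
def gradNormSq (u : Pt n m → ℂ) (p : Pt n m) : ℝ :=
  (∑ i : Fin n, ‖fderiv ℝ u p (ex n m i)‖^2) +
  ∑ i : Fin m, ‖fderiv ℝ u p (ey n m i)‖^2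

/-- The right hand side `f := -Δu - (λ+iε)u + Vu` of the resolvent equation. -/
def resf (V : Pt n m → ℝ) (lam eps : ℝ) (u : Pt n m → ℂ) : Pt n m → ℂ :=
  fun p => -lap u p - (lam + eps * Complex.I) * u p + (V p : ℂ) * u p

/-- A repulsive potential: nonnegative, continuous, `C¹` in `x` for `x ≠ 0`, and
`x·∇ₓ(|x| V) ≤ 0` for `x ≠ 0`. -/
structure IsRepulsive (V : Pt n m → ℝ) : Prop where
  nonneg : ∀ p, 0 ≤ V p
  continuous : Continuous V
  cdiff : ∀ y : EuclideanSpace ℝ (Fin m), ContDiffOn ℝ 1 (fun x => V (x, y)) {x | x ≠ 0}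
  repulsive : ∀ (x : EuclideanSpace ℝ (Fin n)) (y : EuclideanSpace ℝ (Fin m)), x ≠ 0 →
    fderiv ℝ (fun x' : EuclideanSpace ℝ (Fin n) => ‖x'‖ * V (x', y)) x x ≤ 0

/-!
Let `‖u‖ = sup_r r^(-s/2) ‖u‖_{L²(|x| ≤ r)}` (`s = 1` for `X`, `s = 3` for `X₁`). Split
`ℝⁿ × ℝᵐ` into the cylinder `|x| ≤ R` and the dyadic shells `2^k R ≤ |x| ≤ 2^(k+1) R`. On the
`k`-th shell `⟨x⟩_R^(-2s) ≤ (4^k R)^(-s)`, while the mass of `|u|²` in the enclosing cylinder is at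
most `(2^(k+1) R)^s ‖u‖²`, so for `s ≥ 1` the shell contributes at most `2^s 2^(-k) ‖u‖²`.
Summing the geometric series, `‖⟨x⟩_R^(-s) u‖²_{L²} ≤ (1 + 2^(s+1)) ‖u‖²`, and `√5 ≤ 4`,
`√17 ≤ 10`.
-/

section Dyadic

variable {α : Type*} {ρ : α → ℝ} {R s : ℝ}

lemma exists_two_pow_mul_le_le (hR : 0 < R) {t : ℝ} (ht : R ≤ t) :
    ∃ k : ℕ, 2 ^ k * R ≤ t ∧ t ≤ 2 ^ (k + 1) * R := by
  obtain ⟨k, hk, hk'⟩ := exists_nat_pow_near ((one_le_div hR).2 ht) one_lt_two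
  exact ⟨k, (le_div_iff₀ hR).1 hk, ((div_lt_iff₀ hR).1 hk').le⟩

lemma rpow_neg_mul_rpow_le_geometric (hR : 0 < R) (hs : 1 ≤ s) (k : ℕ) :
    (4 ^ k * R) ^ (-s) * (2 ^ (k + 1) * R) ^ s ≤ 2 ^ s * 2⁻¹ ^ k := by
  have hratio : (4 ^ k * R)⁻¹ * (2 ^ (k + 1) * R) = 2 * (2⁻¹ : ℝ) ^ k := by
    rw [show (4 : ℝ) = 2 * 2 by norm_num, mul_pow, inv_pow, pow_succ]
    field_simp
  have hpow : ((2⁻¹ : ℝ) ^ k) ^ s ≤ 2⁻¹ ^ k := by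
    rw [← Real.rpow_natCast, ← Real.rpow_mul (by norm_num)]
    exact Real.rpow_le_rpow_of_exponent_ge (by norm_num) (by norm_num)
      (le_mul_of_one_le_right k.cast_nonneg hs)
  calc (4 ^ k * R) ^ (-s) * (2 ^ (k + 1) * R) ^ s
      = ((4 ^ k * R)⁻¹ * (2 ^ (k + 1) * R)) ^ s := by
        rw [Real.rpow_neg (by positivity), ← Real.inv_rpow (by positivity),
          ← Real.mul_rpow (by positivity) (by positivity)]
    _ = 2 ^ s * ((2⁻¹ : ℝ) ^ k) ^ s := by
        rw [hratio, Real.mul_rpow (by norm_num) (by positivity)]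
    _ ≤ 2 ^ s * 2⁻¹ ^ k := by gcongr

def dyadicShell (ρ : α → ℝ) (R : ℝ) (k : ℕ) : Set α :=
  {a | 2 ^ k * R ≤ ρ a ∧ ρ a ≤ 2 ^ (k + 1) * R}

lemma univ_subset_union_dyadicShell (hR : 0 < R) :
    Set.univ ⊆ {a | ρ a ≤ R} ∪ ⋃ k, dyadicShell ρ R k := by
  intro a _
  rcases le_or_gt (ρ a) R with h | h
  · exact Or.inl h
  · exact Or.inr (Set.mem_iUnion.2 (exists_two_pow_mul_le_le hR h.le))

variable [MeasurableSpace α] {μ : Measure α}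

lemma measurableSet_dyadicShell (hρ : Measurable ρ) (R : ℝ) (k : ℕ) :
    MeasurableSet (dyadicShell ρ R k) :=
  (measurableSet_le measurable_const hρ).inter (measurableSet_le hρ measurable_const)

lemma setLIntegral_ofReal_mul_le {S : Set α} (hS : MeasurableSet S) {w : α → ℝ} {c : ℝ}
    (hw : ∀ a ∈ S, w a ≤ c) (f : α → ℝ≥0∞) :
    ∫⁻ a in S, ENNReal.ofReal (w a) * f a ∂μ ≤ ENNReal.ofReal c * ∫⁻ a in S, f a ∂μ := by
  rw [← lintegral_const_mul' _ _ ofReal_ne_top]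
  exact setLIntegral_mono' hS fun a ha => mul_le_mul_left (ofReal_le_ofReal (hw a ha)) _

lemma setLIntegral_ball_weight_mul_le_of_morrey (hρ : Measurable ρ) (hR : 0 < R) (hs : 0 ≤ s)
    {f : α → ℝ≥0∞} {N : ℝ≥0∞}
    (hN : ∫⁻ a in {a | ρ a ≤ R}, f a ∂μ ≤ ENNReal.ofReal (R ^ s) * N) :
    ∫⁻ a in {a | ρ a ≤ R}, ENNReal.ofReal ((R + ρ a ^ 2 / R) ^ (-s)) * f a ∂μ ≤ N :=
  calc ∫⁻ a in {a | ρ a ≤ R}, ENNReal.ofReal ((R + ρ a ^ 2 / R) ^ (-s)) * f a ∂μ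
      ≤ ENNReal.ofReal (R ^ (-s)) * (ENNReal.ofReal (R ^ s) * N) :=
        (setLIntegral_ofReal_mul_le (measurableSet_le hρ measurable_const) (fun a _ =>
          Real.rpow_le_rpow_of_nonpos hR (le_add_of_nonneg_right (by positivity)) (by linarith))
          f).trans (mul_le_mul_right hN _)
    _ = N := by
        rw [← mul_assoc, ← ofReal_mul (by positivity), ← Real.rpow_add hR, neg_add_cancel,
          Real.rpow_zero, ofReal_one, one_mul]

lemma setLIntegral_dyadicShell_weight_mul_le_of_morrey (hρ : Measurable ρ) (hR : 0 < R)
    (hs : 1 ≤ s) {f : α → ℝ≥0∞} {N : ℝ≥0∞} (k : ℕ)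
    (hN : ∫⁻ a in {a | ρ a ≤ 2 ^ (k + 1) * R}, f a ∂μ ≤
      ENNReal.ofReal ((2 ^ (k + 1) * R) ^ s) * N) :
    ∫⁻ a in dyadicShell ρ R k, ENNReal.ofReal ((R + ρ a ^ 2 / R) ^ (-s)) * f a ∂μ ≤
      ENNReal.ofReal (2 ^ s) * 2⁻¹ ^ k * N := by
  have hweight : ∀ a ∈ dyadicShell ρ R k, (R + ρ a ^ 2 / R) ^ (-s) ≤ (4 ^ k * R) ^ (-s) := by
    rintro a ⟨hlow, -⟩
    refine Real.rpow_le_rpow_of_nonpos (by positivity) ?_ (by linarith)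
    have : 4 ^ k * R * R ≤ ρ a ^ 2 :=
      calc 4 ^ k * R * R = (2 ^ k * R) ^ 2 := by rw [mul_pow, ← pow_mul, pow_mul']; ring
        _ ≤ ρ a ^ 2 := pow_le_pow_left₀ (by positivity) hlow 2
    have : 4 ^ k * R ≤ ρ a ^ 2 / R := (le_div_iff₀ hR).2 this
    linarith
  calc ∫⁻ a in dyadicShell ρ R k, ENNReal.ofReal ((R + ρ a ^ 2 / R) ^ (-s)) * f a ∂μ
      ≤ ENNReal.ofReal ((4 ^ k * R) ^ (-s)) * ∫⁻ a in dyadicShell ρ R k, f a ∂μ :=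
        setLIntegral_ofReal_mul_le (measurableSet_dyadicShell hρ R k) hweight f
    _ ≤ ENNReal.ofReal ((4 ^ k * R) ^ (-s)) * (ENNReal.ofReal ((2 ^ (k + 1) * R) ^ s) * N) :=
        mul_le_mul_right ((lintegral_mono_set
          (Set.ofPred_subset_ofPred.2 fun _ => And.right)).trans hN) _
    _ ≤ ENNReal.ofReal (2 ^ s * 2⁻¹ ^ k) * N := by
        rw [← mul_assoc, ← ofReal_mul (by positivity)]
        exact mul_le_mul_left (ofReal_le_ofReal (rpow_neg_mul_rpow_le_geometric hR hs k)) _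
    _ = ENNReal.ofReal (2 ^ s) * 2⁻¹ ^ k * N := by
        rw [ofReal_mul (by positivity), ofReal_pow (by norm_num), ofReal_inv_of_pos two_pos,
          ofReal_ofNat]

theorem lintegral_weight_mul_le_of_morrey (hρ : Measurable ρ) (hR : 0 < R) (hs : 1 ≤ s)
    {f : α → ℝ≥0∞} {N : ℝ≥0∞}
    (hN : ∀ r, 0 < r → ∫⁻ a in {a | ρ a ≤ r}, f a ∂μ ≤ ENNReal.ofReal (r ^ s) * N) :
    ∫⁻ a, ENNReal.ofReal ((R + ρ a ^ 2 / R) ^ (-s)) * f a ∂μ ≤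
      (1 + ENNReal.ofReal (2 ^ s) * 2) * N := by
  set g := fun a => ENNReal.ofReal ((R + ρ a ^ 2 / R) ^ (-s)) * f a
  calc ∫⁻ a, g a ∂μ
      ≤ ∫⁻ a in {a | ρ a ≤ R} ∪ ⋃ k, dyadicShell ρ R k, g a ∂μ := by
        rw [← setLIntegral_univ]
        exact lintegral_mono_set (univ_subset_union_dyadicShell hR)
    _ ≤ ∫⁻ a in {a | ρ a ≤ R}, g a ∂μ + ∑' k, ∫⁻ a in dyadicShell ρ R k, g a ∂μ :=
        (lintegral_union_le _ _ _).trans (add_le_add_right (lintegral_iUnion_le _ _) _)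
    _ ≤ N + ∑' k : ℕ, ENNReal.ofReal (2 ^ s) * 2⁻¹ ^ k * N :=
        add_le_add (setLIntegral_ball_weight_mul_le_of_morrey hρ hR (by linarith) (hN R hR))
          (ENNReal.tsum_le_tsum fun k =>
            setLIntegral_dyadicShell_weight_mul_le_of_morrey hρ hR hs k (hN _ (by positivity)))
    _ = (1 + ENNReal.ofReal (2 ^ s) * 2) * N := by
        rw [ENNReal.tsum_mul_right, ENNReal.tsum_mul_left, ENNReal.tsum_geometric,
          ENNReal.one_sub_inv_two, inv_inv]
        ring

end Dyadic

section Weighted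

variable {α E : Type*} [MeasurableSpace α] {μ : Measure α} [NormedAddCommGroup E]

lemma eLpNorm_two_sq (f : α → E) :
    eLpNorm f 2 μ ^ 2 = ∫⁻ a, ‖f a‖ₑ ^ 2 ∂μ := by
  simpa using eLpNorm_nnreal_pow_eq_lintegral (f := f) (μ := μ) (p := 2) two_ne_zero

variable [NormedSpace ℝ E]

lemma enorm_rpow_smul_sq {w : ℝ} (hw : 0 < w) (s : ℝ) (x : E) :
    ‖w ^ (-s / 2) • x‖ₑ ^ 2 = ENNReal.ofReal (w ^ (-s)) * ‖x‖ₑ ^ 2 := by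
  rw [enorm_smul, Real.enorm_eq_ofReal (by positivity), mul_pow, ← ofReal_pow (by positivity),
    ← Real.rpow_natCast, ← Real.rpow_mul hw.le]
  norm_num

theorem eLpNorm_weight_smul_le_of_morrey {ρ : α → ℝ} (hρ : Measurable ρ) {R s : ℝ}
    (hR : 0 < R) (hs : 1 ≤ s) (u : α → E) {M C : ℝ≥0∞}
    (hM : ∀ r, 0 < r → eLpNorm u 2 (μ.restrict {a | ρ a ≤ r}) ≤ ENNReal.ofReal (r ^ (s / 2)) * M)
    (hC : 1 + ENNReal.ofReal (2 ^ s) * 2 ≤ C ^ 2) :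
    eLpNorm (fun a => (R + ρ a ^ 2 / R) ^ (-s / 2) • u a) 2 μ ≤ C * M := by
  have hN (r : ℝ) (hr : 0 < r) :
      ∫⁻ a in {a | ρ a ≤ r}, ‖u a‖ₑ ^ 2 ∂μ ≤ ENNReal.ofReal (r ^ s) * M ^ 2 :=
    calc ∫⁻ a in {a | ρ a ≤ r}, ‖u a‖ₑ ^ 2 ∂μ
        ≤ (ENNReal.ofReal (r ^ (s / 2)) * M) ^ 2 := by
          rw [← eLpNorm_two_sq]
          exact pow_le_pow_left' (hM r hr) 2
      _ = ENNReal.ofReal (r ^ s) * M ^ 2 := by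
          rw [mul_pow, ← ofReal_pow (by positivity), ← Real.rpow_natCast, ← Real.rpow_mul hr.le]
          norm_num
  rw [← ENNReal.pow_le_pow_left_iff two_ne_zero, eLpNorm_two_sq]
  simp only [fun a => enorm_rpow_smul_sq (show 0 < R + ρ a ^ 2 / R by positivity) s (u a)]
  calc ∫⁻ a, ENNReal.ofReal ((R + ρ a ^ 2 / R) ^ (-s)) * ‖u a‖ₑ ^ 2 ∂μ
      ≤ (1 + ENNReal.ofReal (2 ^ s) * 2) * M ^ 2 :=
        lintegral_weight_mul_le_of_morrey hρ hR hs hN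
    _ ≤ (C * M) ^ 2 := by
        rw [mul_pow]
        exact mul_le_mul_left hC _

end Weighted

lemma le_ofReal_rpow_mul_iSup (F : ℝ → ℝ≥0∞) (s : ℝ) {r : ℝ} (hr : 0 < r) :
    F r ≤ ENNReal.ofReal (r ^ (s / 2)) *
      ⨆ (R : ℝ) (_ : 0 < R), ENNReal.ofReal (R ^ (-s / 2)) * F R :=
  calc F r = ENNReal.ofReal (r ^ (s / 2)) * (ENNReal.ofReal (r ^ (-s / 2)) * F r) := by
        rw [← mul_assoc, ← ofReal_mul (by positivity), ← Real.rpow_add hr, neg_div,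
          add_neg_cancel, Real.rpow_zero, ofReal_one, one_mul]
    _ ≤ _ := mul_le_mul_right (le_iSup₂ (f := fun R (_ : 0 < R) =>
        ENNReal.ofReal (R ^ (-s / 2)) * F R) r hr) _

theorem MC_to_weight_general (n m : ℕ)
    (u : Pt n m → ℂ) (R : ℝ) (hR : 0 < R) :
    eLpNorm (fun p : Pt n m => ((R + ‖p.1‖ ^ 2 / R) ^ (-(1:ℝ)/2)) • u p) 2 volume ≤
        4 * normX u
    ∧ eLpNorm (fun p : Pt n m => ((R + ‖p.1‖ ^ 2 / R) ^ (-(3:ℝ)/2)) • u p) 2 volume ≤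
        10 * normX1 u := by
  have hρ : Measurable fun p : Pt n m => ‖p.1‖ := measurable_fst.norm
  constructor
  · refine eLpNorm_weight_smul_le_of_morrey hρ hR le_rfl u
      (fun r hr => le_ofReal_rpow_mul_iSup (fun r => L2 u {p : Pt n m | ‖p.1‖ ≤ r}) 1 hr) ?_
    norm_num
  · refine eLpNorm_weight_smul_le_of_morrey hρ hR (by norm_num) u
      (fun r hr => le_ofReal_rpow_mul_iSup (fun r => L2 u {p : Pt n m | ‖p.1‖ ≤ r}) 3 hr) ?_
    norm_num

/-- `‖⟨x⟩_R^{-1}u‖_{L²} ≤ 4‖u‖_X` and `‖⟨x⟩_R^{-3}u‖_{L²} ≤ 10‖u‖_{X₁}`. -/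
theorem MC_to_weight (n m : ℕ) (hn : 1 ≤ n) (hm : 1 ≤ m)
    (u : Pt n m → ℂ) (hu : Measurable u) (R : ℝ) (hR : 0 < R) :
    eLpNorm (fun p : Pt n m => ((R + ‖p.1‖ ^ 2 / R) ^ (-(1:ℝ)/2)) • u p) 2 volume ≤
        4 * normX u
    ∧ eLpNorm (fun p : Pt n m => ((R + ‖p.1‖ ^ 2 / R) ^ (-(3:ℝ)/2)) • u p) 2 volume ≤
        10 * normX1 u :=
  MC_to_weight_general n m u R hR
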